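/- arXiv:1902.10559 — 3 statements merged into one kernel-verified Lean document; each statement's English description precedes it below -/
import Mathlib

section
/- Let A be an M×N real matrix (M, N even) satisfying w_{i,j} = w_{M−i+1, N−j+1}, and let A¹, A², p¹, p² be the half-size difference/sum matrices and vectors as above. Suppose f̄¹ ∈ R^{N/2} is a least-squares solution of minimal Euclidean norm (normal pseudo-solution) of A¹ x = p¹ and f̄² is the normal pseudo-solution of A² x = p². Then the vector f̄ ∈ R^N defined by f̄_j = (f̄²_j + f̄¹_j)/2, f̄_{N−j+1} = (f̄²_j − f̄¹_j)/2 for j = 1,…,N/2 is the normal pseudo-solution of A x = p. -/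
/-- Embedding of `Fin k` into the first half of `Fin (2*k)`. -/
def emb {k : ℕ} : Fin k → Fin (2 * k) := Fin.castLE (by omega)

/-- Squared Euclidean norm of the residual of the linear system `A x = p`. -/
def resSq {M N : ℕ} (A : Matrix (Fin M) (Fin N) ℝ) (p : Fin M → ℝ) (x : Fin N → ℝ) : ℝ :=
  ∑ i, (A.mulVec x i - p i) ^ 2

/-- `x` is the normal pseudo-solution of `A x = p`: it minimizes the Euclidean residual
`‖A x - p‖`, and among all such minimizers it has minimal Euclidean norm. -/
def IsNormalPseudoSol {M N : ℕ} (A : Matrix (Fin M) (Fin N) ℝ) (p : Fin M → ℝ)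
    (x : Fin N → ℝ) : Prop :=
  (∀ y, resSq A p x ≤ resSq A p y) ∧
  (∀ y, (∀ z, resSq A p y ≤ resSq A p z) → ∑ j, (x j) ^ 2 ≤ ∑ j, (y j) ^ 2)

lemma val_emb {k : ℕ} (i : Fin k) : ((emb i : Fin (2*k)) : ℕ) = i := rfl

lemma val_emb_rev {k : ℕ} (i : Fin k) : (((emb i).rev : Fin (2*k)) : ℕ) = 2*k - 1 - i := by
  have := i.isLt
  simp [Fin.val_rev, val_emb]
  omega

lemma sum_split {m : ℕ} (g : Fin (2 * m) → ℝ) :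
    ∑ i, g i = ∑ i : Fin m, (g (emb i) + g (emb i).rev) := by
  have hbij : Function.Bijective (Sum.elim (@emb m) (fun i : Fin m => (emb i).rev)) := by
    rw [Fintype.bijective_iff_injective_and_card]
    refine ⟨?_, by simp; omega⟩
    rintro (a | a) (b | b) hab
    · have h := congrArg Fin.val hab
      simp only [Sum.elim_inl, val_emb] at h
      exact congrArg Sum.inl (Fin.ext h)
    · have h := congrArg Fin.val hab
      simp only [Sum.elim_inl, Sum.elim_inr, val_emb, val_emb_rev] at h
      have := a.isLt; have := b.isLt; omega
    · have h := congrArg Fin.val hab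
      simp only [Sum.elim_inl, Sum.elim_inr, val_emb, val_emb_rev] at h
      have := a.isLt; have := b.isLt; omega
    · have h := congrArg Fin.val hab
      simp only [Sum.elim_inr, val_emb_rev] at h
      have := a.isLt; have := b.isLt
      exact congrArg Sum.inr (Fin.ext (by omega))
  calc ∑ i, g i
      = ∑ x : Fin m ⊕ Fin m, g (Sum.elim (@emb m) (fun i : Fin m => (emb i).rev) x) :=
        (Fintype.sum_bijective _ hbij _ _ (fun x => rfl)).symm
    _ = ∑ i : Fin m, (g (emb i) + g (emb i).rev) := by
        rw [Fintype.sum_sum_type, ← Finset.sum_add_distrib]; rfl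

noncomputable def glue {n : ℕ} (z1 z2 : Fin n → ℝ) (i : Fin (2*n)) : ℝ :=
  if h : (i : ℕ) < n then (z2 ⟨i, h⟩ + z1 ⟨i, h⟩)/2
  else (z2 ⟨2*n - 1 - i, by have := i.isLt; omega⟩ - z1 ⟨2*n - 1 - i, by have := i.isLt; omega⟩)/2

lemma glue_emb {n : ℕ} (z1 z2 : Fin n → ℝ) (j : Fin n) :
    glue z1 z2 (emb j) = (z2 j + z1 j)/2 := by
  have h1 : ((emb j : Fin (2*n)) : ℕ) < n := j.isLt
  simp only [glue]
  rw [dif_pos h1]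
  rfl

lemma glue_rev {n : ℕ} (z1 z2 : Fin n → ℝ) (j : Fin n) :
    glue z1 z2 (emb j).rev = (z2 j - z1 j)/2 := by
  have hj := j.isLt
  have h2 : ¬ (((emb j).rev : Fin (2*n)) : ℕ) < n := by rw [val_emb_rev]; omega
  simp only [glue]
  rw [dif_neg h2]
  have h3 : (⟨2*n - 1 - (((emb j).rev : Fin (2*n)) : ℕ), by have := ((emb j).rev : Fin (2*n)).isLt; omega⟩ : Fin n) = j := by
    apply Fin.ext
    simp only [Fin.val_rev, val_emb]
    omega
  rw [h3]

def Dv {n : ℕ} (y : Fin (2*n) → ℝ) (j : Fin n) : ℝ := y (emb j) - y (emb j).rev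
def Sv {n : ℕ} (y : Fin (2*n) → ℝ) (j : Fin n) : ℝ := y (emb j) + y (emb j).rev

lemma glue_D {n : ℕ} (z1 z2 : Fin n → ℝ) : Dv (glue z1 z2) = z1 :=
  funext fun j => by simp only [Dv, glue_emb, glue_rev]; ring

lemma glue_S {n : ℕ} (z1 z2 : Fin n → ℝ) : Sv (glue z1 z2) = z2 :=
  funext fun j => by simp only [Sv, glue_emb, glue_rev]; ring

lemma mulVec_split {m n : ℕ} (A : Matrix (Fin (2*m)) (Fin (2*n)) ℝ)
    (hA : ∀ i j, A i j = A i.rev j.rev)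
    (A1 A2 : Matrix (Fin m) (Fin n) ℝ)
    (hA1 : ∀ i j, A1 i j = A (emb i) (emb j) - A (emb i).rev (emb j))
    (hA2 : ∀ i j, A2 i j = A (emb i) (emb j) + A (emb i).rev (emb j))
    (y : Fin (2*n) → ℝ) (i : Fin m) :
    A.mulVec y (emb i) - A.mulVec y (emb i).rev = A1.mulVec (Dv y) i ∧
    A.mulVec y (emb i) + A.mulVec y (emb i).rev = A2.mulVec (Sv y) i := by
  have hs1 : ∀ j : Fin n, A (emb i) (emb j).rev = A (emb i).rev (emb j) := by
    intro j; rw [hA (emb i) (emb j).rev, Fin.rev_rev]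
  have hs2 : ∀ j : Fin n, A (emb i).rev (emb j).rev = A (emb i) (emb j) := by
    intro j; rw [hA (emb i).rev (emb j).rev, Fin.rev_rev, Fin.rev_rev]
  have h1 : A.mulVec y (emb i)
      = ∑ j : Fin n, (A (emb i) (emb j) * y (emb j) + A (emb i) (emb j).rev * y (emb j).rev) :=
    sum_split (fun j => A (emb i) j * y j)
  have h2 : A.mulVec y (emb i).rev
      = ∑ j : Fin n, (A (emb i).rev (emb j) * y (emb j) + A (emb i).rev (emb j).rev * y (emb j).rev) :=
    sum_split (fun j => A (emb i).rev j * y j)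
  constructor
  · rw [h1, h2]
    show _ = ∑ j, A1 i j * Dv y j
    rw [← Finset.sum_sub_distrib]
    apply Finset.sum_congr rfl
    intro j _
    rw [hA1, hs1, hs2]
    simp only [Dv]
    ring
  · rw [h1, h2]
    show _ = ∑ j, A2 i j * Sv y j
    rw [← Finset.sum_add_distrib]
    apply Finset.sum_congr rfl
    intro j _
    rw [hA2, hs1, hs2]
    simp only [Sv]
    ring

lemma res_split {m n : ℕ} (A : Matrix (Fin (2*m)) (Fin (2*n)) ℝ)
    (hA : ∀ i j, A i j = A i.rev j.rev)
    (p : Fin (2*m) → ℝ)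
    (A1 A2 : Matrix (Fin m) (Fin n) ℝ)
    (hA1 : ∀ i j, A1 i j = A (emb i) (emb j) - A (emb i).rev (emb j))
    (hA2 : ∀ i j, A2 i j = A (emb i) (emb j) + A (emb i).rev (emb j))
    (p1 p2 : Fin m → ℝ)
    (hp1 : ∀ i, p1 i = p (emb i) - p (emb i).rev)
    (hp2 : ∀ i, p2 i = p (emb i) + p (emb i).rev)
    (y : Fin (2*n) → ℝ) :
    resSq A p y = (resSq A1 p1 (Dv y) + resSq A2 p2 (Sv y))/2 := by
  simp only [resSq]
  rw [sum_split (fun i => (A.mulVec y i - p i)^2), ← Finset.sum_add_distrib, Finset.sum_div]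
  apply Finset.sum_congr rfl
  intro i _
  obtain ⟨e1, e2⟩ := mulVec_split A hA A1 A2 hA1 hA2 y i
  rw [hp1, hp2, ← e1, ← e2]
  ring

lemma norm_split {n : ℕ} (y : Fin (2*n) → ℝ) :
    ∑ j, (y j)^2 = ((∑ j, (Dv y j)^2) + ∑ j, (Sv y j)^2)/2 := by
  rw [sum_split (fun j => (y j)^2), ← Finset.sum_add_distrib, Finset.sum_div]
  apply Finset.sum_congr rfl
  intro j _
  simp only [Dv, Sv]
  ring


/-- Theorem 2: the normal pseudo-solutions of the half-size systems assemble into the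
normal pseudo-solution of the original centrosymmetric system. -/
theorem stmt5 (m n : ℕ) (hm : 0 < m) (hn : 0 < n)
    (A : Matrix (Fin (2 * m)) (Fin (2 * n)) ℝ)
    (hA : ∀ i j, A i j = A i.rev j.rev)
    (p : Fin (2 * m) → ℝ)
    (A1 A2 : Matrix (Fin m) (Fin n) ℝ)
    (hA1 : ∀ i j, A1 i j = A (emb i) (emb j) - A (emb i).rev (emb j))
    (hA2 : ∀ i j, A2 i j = A (emb i) (emb j) + A (emb i).rev (emb j))
    (p1 p2 : Fin m → ℝ)
    (hp1 : ∀ i, p1 i = p (emb i) - p (emb i).rev)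
    (hp2 : ∀ i, p2 i = p (emb i) + p (emb i).rev)
    (f1 f2 : Fin n → ℝ)
    (hf1 : IsNormalPseudoSol A1 p1 f1)
    (hf2 : IsNormalPseudoSol A2 p2 f2)
    (f : Fin (2 * n) → ℝ)
    (hfa : ∀ j : Fin n, f (emb j) = (f2 j + f1 j) / 2)
    (hfb : ∀ j : Fin n, f (emb j).rev = (f2 j - f1 j) / 2) :
    IsNormalPseudoSol A p f := by
  have hres : ∀ y, resSq A p y = (resSq A1 p1 (Dv y) + resSq A2 p2 (Sv y))/2 :=
    fun y => res_split A hA p A1 A2 hA1 hA2 p1 p2 hp1 hp2 y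
  have hDf : Dv f = f1 := funext fun j => by simp only [Dv, hfa, hfb]; ring
  have hSf : Sv f = f2 := funext fun j => by simp only [Sv, hfa, hfb]; ring
  constructor
  · intro y
    rw [hres y, hres f, hDf, hSf]
    have h1 := hf1.1 (Dv y)
    have h2 := hf2.1 (Sv y)
    linarith
  · intro y hy
    have hD : ∀ z, resSq A1 p1 (Dv y) ≤ resSq A1 p1 z := by
      intro z
      have h := hy (glue z (Sv y))
      rw [hres y, hres (glue z (Sv y)), glue_D, glue_S] at h
      linarith
    have hS : ∀ z, resSq A2 p2 (Sv y) ≤ resSq A2 p2 z := by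
      intro z
      have h := hy (glue (Dv y) z)
      rw [hres y, hres (glue (Dv y) z), glue_D, glue_S] at h
      linarith
    have n1 := hf1.2 (Dv y) hD
    have n2 := hf2.2 (Sv y) hS
    rw [norm_split f, norm_split y, hDf, hSf]
    linarith
end

section
/- Let A be an M×N real centrosymmetric matrix (w_{i,j} = w_{M−i+1,N−j+1}, M and N even) and let B = AᵀA. Then the half-size difference and sum matrices of B satisfy B¹ = (A¹)ᵀ A¹ and B² = (A²)ᵀ A², where for any centrosymmetric matrix C of size m×n one defines C¹_{i,j} = c_{i,j} − c_{m−i+1,j} and C²_{i,j} = c_{i,j} + c_{m−i+1,j} for 1 ≤ i ≤ m/2, 1 ≤ j ≤ n/2. -/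
/-!
Split every sum over `Fin (2 * m)` into pairs `x, x.rev` with `x` in the first half. Centrosymmetry
gives `A x y.rev = A x.rev y`, so each entry of `halfMat s (Aᵀ * A)` becomes a sum over the first
half of `a a' + b b' + s (a b' + b a')` (with `a, b` the entries of rows `x` and `x.rev`), which is
the corresponding entry of `(halfMat s A)ᵀ * halfMat s A` once `s * s = 1`.
-/

open Matrix

/-- The half-size difference (`s = -1`) and sum (`s = 1`) matrices of a matrix `C`
with both dimensions even: `C¹_{i,j} = c_{i,j} - c_{m-i+1,j}`, `C²_{i,j} = c_{i,j} + c_{m-i+1,j}`. -/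
def halfMat {m n : ℕ} (s : ℝ) (C : Matrix (Fin (2 * m)) (Fin (2 * n)) ℝ) :
    Matrix (Fin m) (Fin n) ℝ :=
  fun i j => C (emb i) (emb j) + s * C (emb i).rev (emb j)

theorem Fin.sum_two_mul_eq_sum_emb_add_rev {M : Type*} [AddCommMonoid M] {m : ℕ}
    (f : Fin (2 * m) → M) : ∑ x, f x = ∑ i : Fin m, (f (emb i) + f (emb i).rev) := by
  rw [← Fin.sum_congr' f (two_mul m).symm, Fin.sum_univ_add, Finset.sum_add_distrib,
    ← Equiv.sum_comp Fin.revPerm (fun i : Fin m => f (Fin.cast _ (Fin.natAdd m i)))]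
  congr 1
  refine Finset.sum_congr rfl fun i _ => congr_arg f (Fin.ext ?_)
  simp only [Fin.revPerm_apply, Fin.val_cast, Fin.val_natAdd, Fin.val_rev, emb, Fin.val_castLE]
  omega

theorem halfMat_transpose_mul_self {m n : ℕ} {s : ℝ} (hs : s * s = 1)
    (A : Matrix (Fin (2 * m)) (Fin (2 * n)) ℝ) (hA : ∀ i j, A i j = A i.rev j.rev) :
    halfMat s (Aᵀ * A) = (halfMat s A)ᵀ * halfMat s A := by
  have hA' : ∀ i j, A i j.rev = A i.rev j := fun i j => by rw [hA, Fin.rev_rev]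
  ext j k
  simp only [halfMat, mul_apply, transpose_apply, hA', Fin.sum_two_mul_eq_sum_emb_add_rev,
    Fin.rev_rev, Finset.mul_sum, ← Finset.sum_add_distrib]
  refine Finset.sum_congr rfl fun i _ => ?_
  linear_combination (-(A (emb i).rev (emb j) * A (emb i).rev (emb k))) * hs

theorem stmt8_general (m n : ℕ)
    (A : Matrix (Fin (2 * m)) (Fin (2 * n)) ℝ)
    (hA : ∀ i j, A i j = A i.rev j.rev) :
    halfMat (-1) (Aᵀ * A) = (halfMat (-1) A)ᵀ * halfMat (-1) A ∧
    halfMat 1 (Aᵀ * A) = (halfMat 1 A)ᵀ * halfMat 1 A :=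
  ⟨halfMat_transpose_mul_self (by norm_num) A hA, halfMat_transpose_mul_self (by norm_num) A hA⟩

/-- For a centrosymmetric `A`, the half-size matrices of `B = Aᵀ A` satisfy
`B¹ = (A¹)ᵀ A¹` and `B² = (A²)ᵀ A²`. -/
theorem stmt8 (m n : ℕ) (hm : 0 < m) (hn : 0 < n)
    (A : Matrix (Fin (2 * m)) (Fin (2 * n)) ℝ)
    (hA : ∀ i j, A i j = A i.rev j.rev) :
    halfMat (-1) (Aᵀ * A) = (halfMat (-1) A)ᵀ * halfMat (-1) A ∧
    halfMat 1 (Aᵀ * A) = (halfMat 1 A)ᵀ * halfMat 1 A :=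
  stmt8_general m n A hA
end

section
/- Let A be an M×N real centrosymmetric matrix (w_{i,j} = w_{M−i+1,N−j+1}, M, N even) with half-size matrices A¹, A². Then rank(A) = rank(A¹) + rank(A²). -/
open Matrix

def Submodule.prodEquiv {R M N : Type*} [Semiring R] [AddCommMonoid M] [AddCommMonoid N]
    [Module R M] [Module R N] (p : Submodule R M) (q : Submodule R N) :
    p.prod q ≃ₗ[R] p × q where
  toFun x := (⟨x.1.1, x.2.1⟩, ⟨x.1.2, x.2.2⟩)
  invFun x := ⟨(x.1.1, x.2.1), ⟨x.1.2, x.2.2⟩⟩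
  map_add' _ _ := rfl
  map_smul' _ _ := rfl
  left_inv _ := rfl
  right_inv _ := rfl

theorem half_smul_add_self {K M : Type*} [Field K] [AddCommGroup M] [Module K M]
    (h2 : (2 : K) ≠ 0) (x : M) : (2 : K)⁻¹ • (x + x) = x := by
  rw [← two_smul K x, smul_smul, inv_mul_cancel₀ h2, one_smul]

namespace Matrix

variable {K : Type*} [Field K]

theorem rank_fromBlocks_zero_zero {m m' n n' : Type*} [Fintype n] [Fintype n']
    (A : Matrix m n K) (D : Matrix m' n' K) :
    (fromBlocks A 0 0 D).rank = A.rank + D.rank := by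
  classical
  have hmulVecLin : (fromBlocks A 0 0 D).mulVecLin =
      ((LinearEquiv.sumArrowLequivProdArrow m m' K K).symm : _ →ₗ[K] _) ∘ₗ
        A.mulVecLin.prodMap D.mulVecLin ∘ₗ
        (LinearEquiv.sumArrowLequivProdArrow n n' K K : _ →ₗ[K] _) := by
    refine LinearMap.ext fun x => funext fun i => ?_
    cases i <;>
      simp [fromBlocks_mulVec, LinearEquiv.sumArrowLequivProdArrow, Equiv.sumArrowEquivProdArrow]
  rw [rank, hmulVecLin, LinearMap.range_comp, LinearMap.range_comp, LinearEquiv.range,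
    Submodule.map_top, LinearEquiv.finrank_map_eq, LinearMap.range_prodMap,
    (Submodule.prodEquiv _ _).finrank_eq, Module.finrank_prod, rank, rank]

variable {m n : Type*} [Fintype m] [DecidableEq m] [Fintype n] [DecidableEq n]

variable (K m) in
def diffSumBlocks : Matrix (m ⊕ m) (m ⊕ m) K := fromBlocks 1 (-1) 1 1

variable (K m) in
def diffSumBlocksInv : Matrix (m ⊕ m) (m ⊕ m) K := (2 : K)⁻¹ • fromBlocks 1 1 (-1) 1

theorem diffSumBlocksInv_mul (h2 : (2 : K) ≠ 0) :
    diffSumBlocksInv K m * diffSumBlocks K m = 1 := by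
  rw [diffSumBlocksInv, diffSumBlocks, smul_mul_assoc, fromBlocks_multiply, ← fromBlocks_one,
    fromBlocks_smul]
  simp only [Matrix.mul_one, Matrix.mul_neg, neg_neg, neg_add_cancel, smul_zero,
    half_smul_add_self h2]

theorem diffSumBlocks_mul_fromBlocks_mul_inv (h2 : (2 : K) ≠ 0) (B C : Matrix m n K) :
    diffSumBlocks K m * fromBlocks B C C B * diffSumBlocksInv K n =
      fromBlocks (B - C) 0 0 (B + C) := by
  rw [diffSumBlocksInv, diffSumBlocks, Matrix.mul_smul, fromBlocks_multiply, fromBlocks_multiply,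
    fromBlocks_smul]
  simp only [Matrix.one_mul, Matrix.mul_one, Matrix.mul_neg, Matrix.neg_mul]
  congr 1
  · rw [show B + -C + -(C + -B) = (B - C) + (B - C) by abel, half_smul_add_self h2]
  · rw [show B + -C + (C + -B) = 0 by abel, smul_zero]
  · rw [show B + C + -(C + B) = 0 by abel, smul_zero]
  · rw [show B + C + (C + B) = (B + C) + (B + C) by abel, half_smul_add_self h2]

theorem rank_fromBlocks_self_swap (h2 : (2 : K) ≠ 0) (B C : Matrix m n K) :
    (fromBlocks B C C B).rank = (B - C).rank + (B + C).rank := by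
  have hm := diffSumBlocksInv_mul (K := K) (m := m) h2
  have hn := diffSumBlocksInv_mul (K := K) (m := n) h2
  rw [← rank_mul_eq_right_of_isUnit_det _ _ (isUnit_det_of_left_inverse hm),
    ← rank_mul_eq_left_of_isUnit_det _ _ (isUnit_det_of_right_inverse hn),
    diffSumBlocks_mul_fromBlocks_mul_inv h2, rank_fromBlocks_zero_zero]

end Matrix

def halvesEquiv (k : ℕ) : Fin k ⊕ Fin k ≃ Fin (2 * k) :=
  (Equiv.sumCongr (Equiv.refl _) Fin.revPerm).trans
    (finSumFinEquiv.trans (finCongr (two_mul k).symm))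

@[simp]
theorem halvesEquiv_inl {k : ℕ} (i : Fin k) : halvesEquiv k (.inl i) = emb i := rfl

@[simp]
theorem halvesEquiv_inr {k : ℕ} (i : Fin k) : halvesEquiv k (.inr i) = (emb i).rev := by
  ext
  simp only [halvesEquiv, emb, Equiv.trans_apply, Equiv.sumCongr_apply, Sum.map_inr,
    Fin.revPerm_apply, finSumFinEquiv_apply_right, finCongr_apply, Fin.val_cast, Fin.val_natAdd,
    Fin.val_rev, Fin.val_castLE]
  omega

theorem submatrix_halvesEquiv_eq_fromBlocks {R : Type*} {m n : ℕ}
    (A : Matrix (Fin (2 * m)) (Fin (2 * n)) R) (hA : ∀ i j, A i j = A i.rev j.rev) :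
    A.submatrix (halvesEquiv m) (halvesEquiv n) =
      fromBlocks (A.submatrix emb emb) (A.submatrix (Fin.rev ∘ emb) emb)
        (A.submatrix (Fin.rev ∘ emb) emb) (A.submatrix emb emb) := by
  ext (i | i) (j | j)
  · rfl
  · simp [hA (emb i)]
  · simp
  · simp [hA (emb i).rev]

theorem stmt12_general (m n : ℕ)
    (A : Matrix (Fin (2 * m)) (Fin (2 * n)) ℝ)
    (hA : ∀ i j, A i j = A i.rev j.rev)
    (A1 A2 : Matrix (Fin m) (Fin n) ℝ)
    (hA1 : ∀ i j, A1 i j = A (emb i) (emb j) - A (emb i).rev (emb j))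
    (hA2 : ∀ i j, A2 i j = A (emb i) (emb j) + A (emb i).rev (emb j)) :
    A.rank = A1.rank + A2.rank := by
  have hA1' : A.submatrix emb emb - A.submatrix (Fin.rev ∘ emb) emb = A1 := by
    ext i j
    exact (hA1 i j).symm
  have hA2' : A.submatrix emb emb + A.submatrix (Fin.rev ∘ emb) emb = A2 := by
    ext i j
    exact (hA2 i j).symm
  rw [← rank_submatrix A (halvesEquiv m) (halvesEquiv n),
    submatrix_halvesEquiv_eq_fromBlocks A hA, rank_fromBlocks_self_swap two_ne_zero, hA1', hA2']

/-- For a centrosymmetric matrix, `rank A = rank A¹ + rank A²`. -/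
theorem stmt12 (m n : ℕ) (hm : 0 < m) (hn : 0 < n)
    (A : Matrix (Fin (2 * m)) (Fin (2 * n)) ℝ)
    (hA : ∀ i j, A i j = A i.rev j.rev)
    (A1 A2 : Matrix (Fin m) (Fin n) ℝ)
    (hA1 : ∀ i j, A1 i j = A (emb i) (emb j) - A (emb i).rev (emb j))
    (hA2 : ∀ i j, A2 i j = A (emb i) (emb j) + A (emb i).rev (emb j)) :
    A.rank = A1.rank + A2.rank :=
  stmt12_general m n A hA A1 A2 hA1 hA2
end
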